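/- For θ ∈ (0,1] and complex s with Re(s) > 1, the Mellin transform of f_θ satisfies ∫₀¹ f_θ(x)·x^{s−1} dx = (ζ(s)/s)·(θ − θ^s), where ζ is the Riemann zeta function. -/

import Mathlib

/-!
Write `{θ/x} = θ/x - ⌊θ/x⌋` and `⌊θ/x⌋ = ∑_{n ≥ 1} 𝟙[x ≤ θ/n]`. Integrating term by term
(legitimate for `Re s > 1`), `∫₀¹ ⌊θ/x⌋ x^{s-1} dx = ∑_n (θ/n)^s / s = θ^s ζ(s) / s`, so
`∫₀¹ {θ/x} x^{s-1} dx = θ/(s-1) - θ^s ζ(s)/s`. Subtracting `θ` times the case `θ = 1` cancels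
the pole term `θ/(s-1)`.
-/

open MeasureTheory

noncomputable def fBN (θ : ℝ) (x : ℝ) : ℝ := Int.fract (θ / x) - θ * Int.fract (1 / x)

open Set

section

variable {s : ℂ}

lemma integrableOn_Ioc_zero_cpow_sub_one (hs : 0 < s.re) (c : ℝ) :
    IntegrableOn (fun x : ℝ => (x : ℂ) ^ (s - 1)) (Ioc 0 c) :=
  (intervalIntegrable_iff.mp (intervalIntegral.intervalIntegrable_cpow' (by simpa))).mono_set
    Ioc_subset_uIoc

lemma setIntegral_Ioc_zero_cpow_sub_one (hs : 0 < s.re) {c : ℝ} (hc : 0 ≤ c) :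
    ∫ x in Ioc 0 c, (x : ℂ) ^ (s - 1) = (c : ℂ) ^ s / s := by
  have hs0 : s ≠ 0 := by rintro rfl; simp at hs
  rw [← intervalIntegral.integral_of_le hc, integral_cpow (Or.inl (by simpa)), sub_add_cancel,
    Complex.ofReal_zero, Complex.zero_cpow hs0, sub_zero]

lemma setIntegral_Ioc_zero_norm_cpow_sub_one (hs : 0 < s.re) {c : ℝ} (hc : 0 ≤ c) :
    ∫ x in Ioc 0 c, ‖(x : ℂ) ^ (s - 1)‖ = c ^ s.re / s.re := by
  have hnorm : EqOn (fun x : ℝ => ‖(x : ℂ) ^ (s - 1)‖) (fun x => x ^ (s.re - 1)) (Ioc 0 c) :=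
    fun x hx => by simp [Complex.norm_cpow_eq_rpow_re_of_pos hx.1]
  rw [setIntegral_congr_fun measurableSet_Ioc hnorm, ← intervalIntegral.integral_of_le hc,
    integral_rpow (Or.inl (by linarith)), sub_add_cancel, Real.zero_rpow hs.ne', sub_zero]

lemma integrableOn_fract_div_mul_cpow (θ : ℝ) (hs : 0 < s.re) (c : ℝ) :
    IntegrableOn (fun x : ℝ => ((Int.fract (θ / x) : ℝ) : ℂ) * (x : ℂ) ^ (s - 1)) (Ioc 0 c) := by
  refine (integrableOn_Ioc_zero_cpow_sub_one hs c).bdd_mul (c := 1) ?_ ?_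
  · exact (Complex.measurable_ofReal.comp
      (measurable_fract.comp (measurable_const.div measurable_id))).aestronglyMeasurable
  · refine ae_of_all _ fun x => ?_
    rw [Complex.norm_real, Real.norm_of_nonneg (Int.fract_nonneg _)]
    exact (Int.fract_lt_one _).le

lemma tsum_indicator_Ioc_div_nat_succ {R : Type*} [NonAssocSemiring R] [TopologicalSpace R]
    (g : ℝ → R) {θ x : ℝ} (hx : 0 < x) :
    ∑' n : ℕ, (Ioc 0 (θ / (n + 1))).indicator g x = ⌊θ / x⌋₊ * g x := by
  have hmem : ∀ n : ℕ, x ∈ Ioc 0 (θ / (n + 1)) ↔ n ∈ Finset.range ⌊θ / x⌋₊ := fun n => by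
    rw [Finset.mem_range, ← Nat.add_one_le_iff, Nat.le_floor_iff' n.succ_ne_zero, mem_Ioc,
      le_div_iff₀ (by positivity), le_div_iff₀ hx, mul_comm]
    simp [hx]
  rw [tsum_eq_sum (s := Finset.range ⌊θ / x⌋₊)
      fun n hn => indicator_of_notMem (mt (hmem n).mp hn) g,
    Finset.sum_congr rfl fun n hn => indicator_of_mem ((hmem n).mpr hn) g]
  simp

lemma tsum_ofReal_div_nat_succ_cpow {θ : ℝ} (hθ : 0 ≤ θ) (hs : 1 < s.re) :
    ∑' n : ℕ, ((θ / (n + 1) : ℝ) : ℂ) ^ s = (θ : ℂ) ^ s * riemannZeta s := by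
  have hterm : ∀ n : ℕ, ((θ / (n + 1) : ℝ) : ℂ) ^ s = (θ : ℂ) ^ s * (1 / ((n : ℂ) + 1) ^ s) :=
    fun n => by
      rw [div_eq_mul_inv, Complex.ofReal_mul, Complex.mul_cpow_ofReal_nonneg hθ (by positivity),
        Complex.ofReal_inv, Complex.inv_cpow _ _ (by
          rw [Complex.arg_ofReal_of_nonneg (by positivity)]; exact Real.pi_ne_zero.symm)]
      push_cast
      ring
  rw [tsum_congr hterm, tsum_mul_left, ← zeta_eq_tsum_one_div_nat_add_one_cpow hs]

lemma setIntegral_floor_div_mul_cpow {θ : ℝ} (hθ0 : 0 ≤ θ) (hθ1 : θ ≤ 1) (hs : 1 < s.re) :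
    ∫ x in Ioc 0 1, (⌊θ / x⌋₊ : ℂ) * (x : ℂ) ^ (s - 1) = (θ : ℂ) ^ s * riemannZeta s / s := by
  have hs0 : 0 < s.re := by linarith
  set F : ℕ → ℝ → ℂ := fun n => (Ioc 0 (θ / (n + 1))).indicator fun x => (x : ℂ) ^ (s - 1)
  have hc : ∀ n : ℕ, 0 ≤ θ / (n + 1) := fun n => by positivity
  have hinter : ∀ n : ℕ, Ioc 0 1 ∩ Ioc 0 (θ / (n + 1)) = Ioc 0 (θ / (n + 1)) := fun n =>
    inter_eq_right.mpr <|
      Ioc_subset_Ioc_right ((div_le_self hθ0 (le_add_of_nonneg_left n.cast_nonneg)).trans hθ1)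
  have hFint : ∀ n, Integrable (F n) (volume.restrict (Ioc 0 1)) := fun n =>
    ((integrableOn_Ioc_zero_cpow_sub_one hs0 _).integrable_indicator measurableSet_Ioc).restrict
  have hFnorm : Summable fun n => ∫ x in Ioc 0 1, ‖F n x‖ := by
    have hζ : Summable fun n : ℕ => θ ^ s.re * (1 / |(n : ℝ) + 1| ^ s.re) / s.re :=
      (((Real.summable_one_div_nat_add_rpow 1 s.re).mpr hs).mul_left _).div_const _
    refine hζ.congr fun n => ?_
    simp_rw [F, norm_indicator_eq_indicator_norm]
    rw [setIntegral_indicator measurableSet_Ioc, hinter,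
      setIntegral_Ioc_zero_norm_cpow_sub_one hs0 (hc n),
      Real.div_rpow hθ0 (by positivity), abs_of_pos (by positivity)]
    ring
  have hsum : EqOn (fun x => ∑' n, F n x) (fun x => (⌊θ / x⌋₊ : ℂ) * (x : ℂ) ^ (s - 1))
      (Ioc 0 1) := fun x hx => tsum_indicator_Ioc_div_nat_succ _ hx.1
  rw [← setIntegral_congr_fun measurableSet_Ioc hsum,
    ← integral_tsum_of_summable_integral_norm hFint hFnorm]
  simp_rw [F, setIntegral_indicator measurableSet_Ioc, hinter,
    setIntegral_Ioc_zero_cpow_sub_one hs0 (hc _)]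
  rw [tsum_div_const, tsum_ofReal_div_nat_succ_cpow hθ0 hs]

lemma setIntegral_fract_div_mul_cpow {θ : ℝ} (hθ0 : 0 ≤ θ) (hθ1 : θ ≤ 1) (hs : 1 < s.re) :
    ∫ x in Ioc 0 1, ((Int.fract (θ / x) : ℝ) : ℂ) * (x : ℂ) ^ (s - 1)
      = θ / (s - 1) - (θ : ℂ) ^ s * riemannZeta s / s := by
  have hfloor : EqOn (fun x : ℝ => (⌊θ / x⌋₊ : ℂ) * (x : ℂ) ^ (s - 1))
      (fun x => θ * (x : ℂ) ^ (s - 1 - 1) - ((Int.fract (θ / x) : ℝ) : ℂ) * (x : ℂ) ^ (s - 1))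
      (Ioc 0 1) := fun x hx => by
    have hx0 : (x : ℂ) ≠ 0 := Complex.ofReal_ne_zero.mpr hx.1.ne'
    dsimp only
    rw [Complex.cpow_sub (s - 1) 1 hx0, Complex.cpow_one,
      show ((⌊θ / x⌋₊ : ℕ) : ℂ) = ((⌊θ / x⌋₊ : ℝ) : ℂ) by norm_cast,
      natCast_floor_eq_intCast_floor (div_nonneg hθ0 hx.1.le), ← Int.self_sub_fract]
    push_cast
    field_simp
  have hpow : ∫ x in Ioc (0 : ℝ) 1, (x : ℂ) ^ (s - 1 - 1) = 1 / (s - 1) := by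
    rw [setIntegral_Ioc_zero_cpow_sub_one (by simp; linarith) zero_le_one, Complex.ofReal_one,
      Complex.one_cpow]
  have h := setIntegral_floor_div_mul_cpow hθ0 hθ1 hs
  rw [setIntegral_congr_fun measurableSet_Ioc hfloor, integral_sub
    ((integrableOn_Ioc_zero_cpow_sub_one (by simp; linarith) 1).const_mul _)
    (integrableOn_fract_div_mul_cpow θ (by linarith) 1), integral_const_mul, hpow] at h
  linear_combination -h

end

theorem stmt_5 (θ : ℝ) (hθ : θ ∈ Set.Ioc (0:ℝ) 1) (s : ℂ) (hs : 1 < s.re) :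
    ∫ x in Set.Ioc (0:ℝ) 1, (fBN θ x : ℂ) * (x:ℂ) ^ (s - 1)
      = riemannZeta s / s * ((θ:ℂ) - (θ:ℂ) ^ s) := by
  have hsplit : EqOn (fun x : ℝ => (fBN θ x : ℂ) * (x : ℂ) ^ (s - 1))
      (fun x => ((Int.fract (θ / x) : ℝ) : ℂ) * (x : ℂ) ^ (s - 1)
        - θ * (((Int.fract (1 / x) : ℝ) : ℂ) * (x : ℂ) ^ (s - 1))) (Ioc 0 1) := fun x _ => by
    simp only [fBN]
    push_cast
    ring
  rw [setIntegral_congr_fun measurableSet_Ioc hsplit,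
    integral_sub (integrableOn_fract_div_mul_cpow θ (by linarith) 1)
      ((integrableOn_fract_div_mul_cpow 1 (by linarith) 1).const_mul _),
    integral_const_mul, setIntegral_fract_div_mul_cpow hθ.1.le hθ.2 hs,
    setIntegral_fract_div_mul_cpow zero_le_one le_rfl hs, Complex.ofReal_one, Complex.one_cpow]
  ring
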